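/- arXiv:1511.04614 — 5 statements merged into one kernel-verified Lean document; each statement's English description precedes it below -/
import Mathlib

section
/- Every nondegenerate lattice over ℤ₂ is an orthogonal direct sum of 1-dimensional lattices and copies of the lattices with Gram matrices [[0,1],[1,0]] and [[2,1],[1,2]], each scaled by powers of 2. -/
/-!
Induct on the rank. Let `b` be an entry of maximal norm of the Gram matrix `G`. If a diagonal
entry `G i i` has norm `‖b‖`, take the pivot block `A = (G i i)`; otherwise `b = G i j` with
`‖G i i‖, ‖G j j‖ < ‖b‖`, and take `A = [[G i i, b], [b, G j j]]`. In both cases every entry of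
`A⁻¹` has norm at most `‖b‖⁻¹`, so `A⁻¹ B` is integral for the off-diagonal block `B`, the shear
`[[1, -A⁻¹ B], [0, 1]]` lies in `GL(ℤ₂)`, and it splits `G` as `A ⊕ S` with `S` the Schur
complement, to which induction applies.

A plane block is `2^k` times `[[α, 1], [1, γ]]` with `α, γ ∈ 2ℤ₂`. Every remaining step is a
shear, a unit rescaling or a swap of the basis, with the parameters supplied by Hensel's lemma for
quadratics `a t² + b t + c` with `b` a unit and `c ∈ 2ℤ₂`. If `α/2` or `γ/2` is even, an isotropic
vector exists and the block becomes `[[0, 1], [1, 0]]`; if both are odd it becomes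
`[[2, 1], [1, 2]]`.
-/

open scoped Matrix

universe u

theorem norm_mul_apply_le_one {p : ℕ} [Fact p.Prime] {l m n : Type*} [Fintype m]
    {M : Matrix l m ℚ_[p]} {N : Matrix m n ℚ_[p]} {i : l} {j : n}
    (h : ∀ k, ‖M i k‖ * ‖N k j‖ ≤ 1) : ‖(M * N) i j‖ ≤ 1 :=
  IsUltrametricDist.norm_sum_le_of_forall_le_of_nonneg zero_le_one fun k _ =>
    (norm_mul _ _).trans_le (h k)

section Congruence

variable {p : ℕ} [Fact p.Prime] {ι κ : Type*} [Fintype ι] [DecidableEq ι] [Fintype κ]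
  [DecidableEq κ]

variable (p ι) in
def integralGL : Set (Matrix ι ι ℚ_[p]) :=
  {M | ∃ P : Matrix ι ι ℤ_[p], IsUnit P.det ∧ P.map PadicInt.Coe.ringHom = M}

theorem one_mem_integralGL : (1 : Matrix ι ι ℚ_[p]) ∈ integralGL p ι :=
  ⟨1, by simp, by simp⟩

theorem mul_mem_integralGL {M N : Matrix ι ι ℚ_[p]} (hM : M ∈ integralGL p ι)
    (hN : N ∈ integralGL p ι) : M * N ∈ integralGL p ι := by
  obtain ⟨P, hP, rfl⟩ := hM
  obtain ⟨Q, hQ, rfl⟩ := hN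
  exact ⟨P * Q, by simpa using hP.mul hQ, Matrix.map_mul⟩

theorem submatrix_mem_integralGL {M : Matrix ι ι ℚ_[p]} (hM : M ∈ integralGL p ι) (e : κ ≃ ι) :
    M.submatrix e e ∈ integralGL p κ := by
  obtain ⟨P, hP, rfl⟩ := hM
  exact ⟨P.submatrix e e, by simpa using hP, (Matrix.submatrix_map _ _ _ _).symm⟩

theorem fromBlocks_mem_integralGL {M : Matrix ι ι ℚ_[p]} {N : Matrix κ κ ℚ_[p]}
    (hM : M ∈ integralGL p ι) (hN : N ∈ integralGL p κ) :
    Matrix.fromBlocks M 0 0 N ∈ integralGL p (ι ⊕ κ) := by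
  obtain ⟨P, hP, rfl⟩ := hM
  obtain ⟨Q, hQ, rfl⟩ := hN
  exact ⟨Matrix.fromBlocks P 0 0 Q, by simpa [Matrix.det_fromBlocks_zero₂₁] using hP.mul hQ,
    by simp [Matrix.fromBlocks_map]⟩

theorem mem_integralGL_of_norm_le_one {M : Matrix ι ι ℚ_[p]} (hM : ∀ i j, ‖M i j‖ ≤ 1)
    (hdet : ‖M.det‖ = 1) : M ∈ integralGL p ι := by
  obtain ⟨P, rfl⟩ : ∃ P : Matrix ι ι ℤ_[p], P.map PadicInt.Coe.ringHom = M :=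
    ⟨.of fun i j => ⟨M i j, hM i j⟩, rfl⟩
  refine ⟨P, ?_, rfl⟩
  rw [PadicInt.isUnit_iff, PadicInt.norm_def]
  exact (congrArg norm (RingHom.map_det PadicInt.Coe.ringHom P)).trans hdet

def IntegrallyCongruent (G H : Matrix ι ι ℚ_[p]) : Prop :=
  ∃ M ∈ integralGL p ι, Mᵀ * G * M = H

namespace IntegrallyCongruent

theorem refl (G : Matrix ι ι ℚ_[p]) : IntegrallyCongruent G G :=
  ⟨1, one_mem_integralGL, by simp⟩

theorem trans {G H K : Matrix ι ι ℚ_[p]} (hGH : IntegrallyCongruent G H)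
    (hHK : IntegrallyCongruent H K) : IntegrallyCongruent G K := by
  obtain ⟨M, hM, rfl⟩ := hGH
  obtain ⟨N, hN, rfl⟩ := hHK
  exact ⟨M * N, mul_mem_integralGL hM hN, by simp only [Matrix.transpose_mul, Matrix.mul_assoc]⟩

instance : Trans (IntegrallyCongruent (p := p) (ι := ι)) IntegrallyCongruent IntegrallyCongruent :=
  ⟨trans⟩

theorem smul {G H : Matrix ι ι ℚ_[p]} (h : IntegrallyCongruent G H) (c : ℚ_[p]) :
    IntegrallyCongruent (c • G) (c • H) := by
  obtain ⟨M, hM, rfl⟩ := h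
  exact ⟨M, hM, by rw [Matrix.mul_smul, Matrix.smul_mul]⟩

theorem isSymm {G H : Matrix ι ι ℚ_[p]} (h : IntegrallyCongruent G H) (hG : G.IsSymm) :
    H.IsSymm := by
  obtain ⟨M, -, rfl⟩ := h
  simp [Matrix.IsSymm, Matrix.transpose_mul, hG.eq, Matrix.mul_assoc]

theorem det_ne_zero {G H : Matrix ι ι ℚ_[p]} (h : IntegrallyCongruent G H) (hG : G.det ≠ 0) :
    H.det ≠ 0 := by
  obtain ⟨_, ⟨P, hP, rfl⟩, rfl⟩ := h
  have hPdet : (P.map PadicInt.Coe.ringHom).det ≠ 0 := by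
    rw [← RingHom.mapMatrix_apply, ← RingHom.map_det]
    exact PadicInt.coe_ne_zero.2 hP.ne_zero
  simp [hPdet, hG]

theorem submatrix {G H : Matrix ι ι ℚ_[p]} (h : IntegrallyCongruent G H) (e : κ ≃ ι) :
    IntegrallyCongruent (G.submatrix e e) (H.submatrix e e) := by
  obtain ⟨M, hM, rfl⟩ := h
  refine ⟨M.submatrix e e, submatrix_mem_integralGL hM e, ?_⟩
  rw [Matrix.transpose_submatrix, Matrix.submatrix_mul_equiv, Matrix.submatrix_mul_equiv]

theorem fromBlocks {A A' : Matrix ι ι ℚ_[p]} {D D' : Matrix κ κ ℚ_[p]}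
    (hA : IntegrallyCongruent A A') (hD : IntegrallyCongruent D D') :
    IntegrallyCongruent (Matrix.fromBlocks A 0 0 D) (Matrix.fromBlocks A' 0 0 D') := by
  obtain ⟨M, hM, rfl⟩ := hA
  obtain ⟨N, hN, rfl⟩ := hD
  refine ⟨Matrix.fromBlocks M 0 0 N, fromBlocks_mem_integralGL hM hN, ?_⟩
  simp [Matrix.fromBlocks_transpose, Matrix.fromBlocks_multiply]

end IntegrallyCongruent

theorem integrallyCongruent_fromBlocks_schur {A : Matrix ι ι ℚ_[p]} {B : Matrix ι κ ℚ_[p]}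
    (D : Matrix κ κ ℚ_[p]) (hA : A.IsSymm) (hAdet : IsUnit A.det)
    (hB : ∀ i j, ‖(A⁻¹ * B) i j‖ ≤ 1) :
    IntegrallyCongruent (Matrix.fromBlocks A B Bᵀ D)
      (Matrix.fromBlocks A 0 0 (D - Bᵀ * A⁻¹ * B)) := by
  let M : Matrix (ι ⊕ κ) (ι ⊕ κ) ℚ_[p] := Matrix.fromBlocks 1 (-(A⁻¹ * B)) 0 1
  have hM : M ∈ integralGL p (ι ⊕ κ) := by
    refine mem_integralGL_of_norm_le_one ?_ (by simp [M])
    rintro (i | i) (j | j) <;> simp only [M, Matrix.fromBlocks_apply₁₁, Matrix.fromBlocks_apply₁₂,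
      Matrix.fromBlocks_apply₂₁, Matrix.fromBlocks_apply₂₂, Matrix.one_apply] <;>
      first | split_ifs <;> simp | simp [hB]
  refine ⟨M, hM, ?_⟩
  have hAinvT : A⁻¹ᵀ = A⁻¹ := by rw [Matrix.transpose_nonsing_inv, hA]
  simp only [M, Matrix.fromBlocks_transpose, Matrix.fromBlocks_multiply]
  simp [Matrix.transpose_mul, hAinvT, Matrix.mul_assoc, Matrix.nonsing_inv_mul _ hAdet,
    Matrix.mul_nonsing_inv_cancel_left _ _ hAdet, sub_eq_neg_add]

end Congruence

open Polynomial in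
theorem exists_root_quadratic_of_norm_lt_one {p : ℕ} [Fact p.Prime] {a b c : ℚ_[p]}
    (ha : ‖a‖ ≤ 1) (hb : ‖b‖ = 1) (hc : ‖c‖ < 1) :
    ∃ t : ℚ_[p], ‖t‖ ≤ 1 ∧ a * t ^ 2 + b * t + c = 0 := by
  obtain ⟨a, rfl⟩ : ∃ a' : ℤ_[p], (a' : ℚ_[p]) = a := ⟨⟨a, ha⟩, rfl⟩
  obtain ⟨b, rfl⟩ : ∃ b' : ℤ_[p], (b' : ℚ_[p]) = b := ⟨⟨b, hb.le⟩, rfl⟩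
  obtain ⟨c, rfl⟩ : ∃ c' : ℤ_[p], (c' : ℚ_[p]) = c := ⟨⟨c, hc.le⟩, rfl⟩
  let F : ℤ_[p][X] := C a * X ^ 2 + C b * X + C c
  have hF₀ : F.aeval (0 : ℤ_[p]) = c := by simp [F]
  have hF'₀ : F.derivative.aeval (0 : ℤ_[p]) = b := by simp [F]
  obtain ⟨z, hz, -⟩ := hensels_lemma (F := F) (a := 0) (by
    rw [hF₀, hF'₀, PadicInt.norm_def, PadicInt.norm_def, hb]; simpa using hc)
  refine ⟨z, z.norm_le_one, ?_⟩
  simpa [F] using congrArg ((↑) : ℤ_[p] → ℚ_[p]) hz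

section FinTwo

variable {p : ℕ} [Fact p.Prime]

theorem transpose_fin_two_of {R : Type*} (a b c d : R) : !![a, b; c, d]ᵀ = !![a, c; b, d] := by
  ext i j; fin_cases i <;> fin_cases j <;> rfl

theorem integrallyCongruent_fin_two {Q : Matrix (Fin 2) (Fin 2) ℚ_[p]} (hQ : ∀ i j, ‖Q i j‖ ≤ 1)
    (hdet : ‖Q.det‖ = 1) {G H : Matrix (Fin 2) (Fin 2) ℚ_[p]} (h : Qᵀ * G * Q = H) :
    IntegrallyCongruent G H :=
  ⟨Q, mem_integralGL_of_norm_le_one hQ hdet, h⟩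

theorem integrallyCongruent_shear {α β γ β' γ' t : ℚ_[p]} (ht : ‖t‖ ≤ 1)
    (hβ : β + t * α = β') (hγ : γ + 2 * t * β + t ^ 2 * α = γ') :
    IntegrallyCongruent !![α, β; β, γ] !![α, β'; β', γ'] := by
  refine integrallyCongruent_fin_two (Q := !![1, t; 0, 1]) ?_ (by simp) ?_
  · intro i j; fin_cases i <;> fin_cases j <;> simp [ht]
  · rw [transpose_fin_two_of, Matrix.mul_fin_two, Matrix.mul_fin_two, ← hβ, ← hγ]
    ext i j; fin_cases i <;> fin_cases j <;> simp <;> ring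

theorem integrallyCongruent_scale {α β γ β' γ' u : ℚ_[p]} (hu : ‖u‖ = 1)
    (hβ : u * β = β') (hγ : u ^ 2 * γ = γ') :
    IntegrallyCongruent !![α, β; β, γ] !![α, β'; β', γ'] := by
  refine integrallyCongruent_fin_two (Q := !![1, 0; 0, u]) ?_ (by simp [hu]) ?_
  · intro i j; fin_cases i <;> fin_cases j <;> simp [hu]
  · rw [transpose_fin_two_of, Matrix.mul_fin_two, Matrix.mul_fin_two, ← hβ, ← hγ]
    ext i j; fin_cases i <;> fin_cases j <;> simp <;> ring

theorem integrallyCongruent_swap (α β γ : ℚ_[p]) :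
    IntegrallyCongruent !![α, β; β, γ] !![γ, β; β, α] := by
  refine integrallyCongruent_fin_two (Q := !![0, 1; 1, 0]) ?_ (by simp) ?_
  · intro i j; fin_cases i <;> fin_cases j <;> simp
  · rw [transpose_fin_two_of, Matrix.mul_fin_two, Matrix.mul_fin_two]
    ext i j; fin_cases i <;> fin_cases j <;> simp

end FinTwo

theorem Padic.norm_two : ‖(2 : ℚ_[2])‖ = 2⁻¹ := by
  simpa using Padic.norm_p (p := 2)

theorem exists_two_mul_eq_of_norm_lt_one {x : ℚ_[2]} (hx : ‖x‖ < 1) :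
    ∃ y : ℚ_[2], ‖y‖ ≤ 1 ∧ 2 * y = x := by
  have hx' : ‖x‖ ≤ 2⁻¹ := by
    simpa using (Padic.norm_le_pow_iff_norm_lt_pow_add_one x (-1)).2 (by simpa using hx)
  refine ⟨x / 2, ?_, by ring⟩
  rwa [norm_div, Padic.norm_two, div_le_one (by norm_num)]

theorem norm_sub_one_lt_one {x : ℚ_[2]} (hx : ‖x‖ = 1) : ‖x - 1‖ < 1 := by
  obtain ⟨x, rfl⟩ : ∃ x' : ℤ_[2], (x' : ℚ_[2]) = x := ⟨⟨x, hx.le⟩, rfl⟩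
  obtain ⟨n, hn, hmem⟩ := PadicInt.exists_mem_range x
  rw [IsLocalRing.mem_maximalIdeal, PadicInt.mem_nonunits, PadicInt.norm_def] at hmem
  interval_cases n
  · simp [hx] at hmem
  · simpa using hmem

theorem norm_one_add_two_mul {x : ℚ_[2]} (hx : ‖x‖ ≤ 1) : ‖1 + 2 * x‖ = 1 := by
  have h2x : ‖2 * x‖ < ‖(1 : ℚ_[2])‖ := by
    rw [norm_mul, Padic.norm_two, norm_one]; nlinarith [norm_nonneg x]
  rw [Padic.add_eq_max_of_ne h2x.ne', norm_one, max_eq_left (by simpa using h2x.le)]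

theorem integrallyCongruent_hyperbolic {a c : ℚ_[2]} (ha : ‖a‖ ≤ 1) (hc : ‖c‖ < 1) :
    IntegrallyCongruent !![2 * a, 1; 1, 2 * c] !![0, 1; 1, 0] := by
  obtain ⟨t, ht, hroot⟩ := exists_root_quadratic_of_norm_lt_one ha (b := 1) norm_one hc
  set u := 1 + 2 * (t * a)
  have hu : ‖u‖ = 1 :=
    norm_one_add_two_mul (by rw [norm_mul]; exact mul_le_one₀ ht (norm_nonneg a) ha)
  have hu0 : u ≠ 0 := norm_ne_zero_iff.1 (by rw [hu]; exact one_ne_zero)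
  -- `t` makes `t e₁ + e₂` isotropic.
  calc IntegrallyCongruent !![2 * a, 1; 1, 2 * c] !![2 * a, u; u, 0] :=
        integrallyCongruent_shear ht (by ring) (by linear_combination 2 * hroot)
    IntegrallyCongruent _ !![2 * a, 1; 1, 0] :=
        integrallyCongruent_scale (u := u⁻¹) (by simp [hu]) (inv_mul_cancel₀ hu0) (by ring)
    IntegrallyCongruent _ !![0, 1; 1, 2 * a] := integrallyCongruent_swap _ _ _
    IntegrallyCongruent _ !![0, 1; 1, 0] :=
        integrallyCongruent_shear (t := -a) (by simpa) (by ring) (by ring)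

theorem integrallyCongruent_anisotropic {a c : ℚ_[2]} (ha : ‖a‖ = 1) (hc : ‖c‖ = 1) :
    IntegrallyCongruent !![2 * a, 1; 1, 2 * c] !![2, 1; 1, 2] := by
  obtain ⟨y, hy, hyroot⟩ :=
    exists_root_quadratic_of_norm_lt_one hc.le norm_one (norm_sub_one_lt_one ha)
  set u := 1 + 2 * (y * c)
  have hu : ‖u‖ = 1 :=
    norm_one_add_two_mul (by rw [norm_mul, hc, mul_one]; exact hy)
  have hu0 : u ≠ 0 := norm_ne_zero_iff.1 (by rw [hu]; exact one_ne_zero)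
  set d := c * u⁻¹ ^ 2
  have hd : ‖d‖ = 1 := by simp [d, hc, hu]
  have h3 : ‖(3 : ℚ_[2])‖ = 1 := by
    have h := norm_one_add_two_mul (x := (1 : ℚ_[2])) (by simp)
    norm_num at h
    exact h
  obtain ⟨s, hs, hsroot⟩ := exists_root_quadratic_of_norm_lt_one (c := 1 - d) h3.le h3
    (by rw [norm_sub_rev]; exact norm_sub_one_lt_one hd)
  have hv : ‖1 + 2 * s‖ = 1 := norm_one_add_two_mul hs
  have hv0 : 1 + 2 * s ≠ 0 := norm_ne_zero_iff.1 (by rw [hv]; exact one_ne_zero)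
  -- `y` gives `e₁ + y e₂` square length `2`, and `s` solves `s² + s + d = (1 + 2 s)²`.
  calc IntegrallyCongruent !![2 * a, 1; 1, 2 * c] !![2 * c, 1; 1, 2 * a] :=
        integrallyCongruent_swap _ _ _
    IntegrallyCongruent _ !![2 * c, u; u, 2] :=
        integrallyCongruent_shear hy (by ring) (by linear_combination 2 * hyroot)
    IntegrallyCongruent _ !![2, u; u, 2 * c] := integrallyCongruent_swap _ _ _
    IntegrallyCongruent _ !![2, 1; 1, 2 * d] :=
        integrallyCongruent_scale (u := u⁻¹) (by simp [hu]) (inv_mul_cancel₀ hu0) (by ring)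
    IntegrallyCongruent _ !![2, 1 + 2 * s; 1 + 2 * s, 2 * d + 2 * s + 2 * s ^ 2] :=
        integrallyCongruent_shear hs (by ring) (by ring)
    IntegrallyCongruent _ !![2, 1; 1, 2] :=
        integrallyCongruent_scale (u := (1 + 2 * s)⁻¹) (by simp [hv]) (inv_mul_cancel₀ hv0) (by
          rw [inv_pow, inv_mul_eq_iff_eq_mul₀ (pow_ne_zero 2 hv0)]
          linear_combination -2 * hsroot)

theorem integrallyCongruent_unit_block {α γ : ℚ_[2]} (hα : ‖α‖ < 1) (hγ : ‖γ‖ < 1) :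
    IntegrallyCongruent !![α, 1; 1, γ] !![0, 1; 1, 0] ∨
      IntegrallyCongruent !![α, 1; 1, γ] !![2, 1; 1, 2] := by
  obtain ⟨a, ha, rfl⟩ := exists_two_mul_eq_of_norm_lt_one hα
  obtain ⟨c, hc, rfl⟩ := exists_two_mul_eq_of_norm_lt_one hγ
  rcases hc.lt_or_eq with hc | hc
  · exact .inl (integrallyCongruent_hyperbolic ha hc)
  rcases ha.lt_or_eq with ha | ha
  · exact .inl ((integrallyCongruent_swap _ _ _).trans (integrallyCongruent_hyperbolic hc.le ha))
  · exact .inr (integrallyCongruent_anisotropic ha hc)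

theorem integrallyCongruent_block {a b c : ℚ_[2]} (hb : b ≠ 0) (ha : ‖a‖ < ‖b‖)
    (hc : ‖c‖ < ‖b‖) : ∃ k : ℤ,
      IntegrallyCongruent !![a, b; b, c] ((2 : ℚ_[2]) ^ k • !![0, 1; 1, 0]) ∨
      IntegrallyCongruent !![a, b; b, c] ((2 : ℚ_[2]) ^ k • !![2, 1; 1, 2]) := by
  set w := (2 : ℚ_[2]) ^ b.valuation
  have hw : ‖w‖ = ‖b‖ := by
    simp [w, Padic.norm_eq_zpow_neg_valuation hb, Padic.norm_two, zpow_neg]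
  have hw0 : w ≠ 0 := zpow_ne_zero _ two_ne_zero
  have hbw : ‖b / w‖ = 1 := by rw [norm_div, hw, div_self (norm_ne_zero_iff.2 hb)]
  have hbw0 : b / w ≠ 0 := div_ne_zero hb hw0
  have hnorm {x : ℚ_[2]} (hx : ‖x‖ < ‖b‖) : ‖x / w‖ < 1 := by
    rwa [norm_div, hw, div_lt_one (norm_pos_iff.2 hb)]
  have hscale : IntegrallyCongruent !![a / w, b / w; b / w, c / w]
      !![a / w, 1; 1, (b / w)⁻¹ ^ 2 * (c / w)] :=
    integrallyCongruent_scale (u := (b / w)⁻¹) (by rw [norm_inv, hbw, inv_one])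
      (inv_mul_cancel₀ hbw0) rfl
  have hsmul : !![a, b; b, c] = w • !![a / w, b / w; b / w, c / w] := by
    ext i j; fin_cases i <;> fin_cases j <;> simp [mul_div_cancel₀ _ hw0]
  refine ⟨b.valuation, ?_⟩
  rw [hsmul]
  refine (integrallyCongruent_unit_block (hnorm ha) ?_).imp
    (fun h => (hscale.trans h).smul w) (fun h => (hscale.trans h).smul w)
  rw [norm_mul, norm_pow, norm_inv, hbw, inv_one, one_pow, one_mul]
  exact hnorm hc

section NormalForm

variable {ι κ : Type*}

def IsNormalForm (H : Matrix ι ι ℚ_[2]) (σ : Equiv.Perm ι) : Prop :=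
  (∀ i, σ (σ i) = i) ∧
  (∀ i j, j ≠ i → j ≠ σ i → H i j = 0) ∧
  (∀ i, σ i = i → H i i ≠ 0) ∧
  (∀ i, σ i ≠ i → ∃ k : ℤ,
    (H i i = 0 ∧ H i (σ i) = (2 : ℚ_[2]) ^ k ∧ H (σ i) (σ i) = 0) ∨
    (H i i = 2 * (2 : ℚ_[2]) ^ k ∧ H i (σ i) = (2 : ℚ_[2]) ^ k ∧
      H (σ i) (σ i) = 2 * (2 : ℚ_[2]) ^ k))

namespace IsNormalForm

theorem submatrix {H : Matrix ι ι ℚ_[2]} {σ : Equiv.Perm ι} (h : IsNormalForm H σ) (e : κ ≃ ι) :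
    IsNormalForm (H.submatrix e e) (e.symm.permCongr σ) := by
  obtain ⟨hσ, hoff, hdiag, hblock⟩ := h
  refine ⟨fun i => by simp [hσ], fun i j hji hjσ => ?_, fun i hi => ?_, fun i hi => ?_⟩
  · refine hoff _ _ (e.injective.ne hji) fun h => hjσ ?_
    simp [← h]
  · refine hdiag _ ?_
    simpa [Equiv.symm_apply_eq] using hi
  · simpa using hblock (e i) (by simpa [Equiv.symm_apply_eq] using hi)

theorem fromBlocks {A : Matrix ι ι ℚ_[2]} {D : Matrix κ κ ℚ_[2]} {σ : Equiv.Perm ι}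
    {τ : Equiv.Perm κ} (hA : IsNormalForm A σ) (hD : IsNormalForm D τ) :
    IsNormalForm (Matrix.fromBlocks A 0 0 D) (σ.sumCongr τ) := by
  obtain ⟨hσ, hAoff, hAdiag, hAblock⟩ := hA
  obtain ⟨hτ, hDoff, hDdiag, hDblock⟩ := hD
  refine ⟨fun i => ?_, fun i j hji hjσ => ?_, fun i hi => ?_, fun i hi => ?_⟩
  · rcases i with i | i <;> simp [hσ, hτ]
  · rcases i with i | i <;> rcases j with j | j <;> simp_all
  · rcases i with i | i <;> simp_all
  · rcases i with i | i <;> simp_all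

end IsNormalForm

theorem isNormalForm_of_isEmpty [IsEmpty ι] (H : Matrix ι ι ℚ_[2]) : IsNormalForm H 1 :=
  ⟨isEmptyElim, isEmptyElim, isEmptyElim, isEmptyElim⟩

theorem isNormalForm_of_subsingleton [Subsingleton ι] {H : Matrix ι ι ℚ_[2]}
    (hH : ∀ i, H i i ≠ 0) : IsNormalForm H 1 :=
  ⟨fun _ => rfl, fun i j hji _ => absurd (Subsingleton.elim j i) hji, fun i _ => hH i,
    fun _ hi => absurd rfl hi⟩

theorem isNormalForm_smul_fin_two (k : ℤ) {x : ℚ_[2]} (hx : x = 0 ∨ x = 2) :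
    IsNormalForm ((2 : ℚ_[2]) ^ k • !![x, 1; 1, x]) (Equiv.swap 0 1) := by
  refine ⟨fun i => by simp, fun i j hji hjσ => ?_, fun i hi => ?_, fun i _ => ⟨k, ?_⟩⟩
  · fin_cases i <;> fin_cases j <;> simp_all
  · fin_cases i <;> simp_all
  · rcases hx with rfl | rfl
    · left; fin_cases i <;> simp
    · right; fin_cases i <;> simp [mul_comm]

end NormalForm

section FiniteIndex

variable {ι κ : Type*} [Fintype ι] [DecidableEq ι] [Fintype κ] [DecidableEq κ]

def HasNormalForm (G : Matrix ι ι ℚ_[2]) : Prop :=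
  ∃ H, IntegrallyCongruent G H ∧ ∃ σ, IsNormalForm H σ

namespace HasNormalForm

theorem of_integrallyCongruent {G H : Matrix ι ι ℚ_[2]} (h : IntegrallyCongruent G H)
    (hH : HasNormalForm H) : HasNormalForm G := by
  obtain ⟨K, hK, σ, hσ⟩ := hH
  exact ⟨K, h.trans hK, σ, hσ⟩

theorem of_submatrix {G : Matrix ι ι ℚ_[2]} (e : κ ≃ ι) (h : HasNormalForm (G.submatrix e e)) :
    HasNormalForm G := by
  obtain ⟨H, hH, σ, hσ⟩ := h
  refine ⟨H.submatrix e.symm e.symm, ?_, _, hσ.submatrix e.symm⟩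
  simpa using hH.submatrix e.symm

theorem fromBlocks {A : Matrix ι ι ℚ_[2]} {D : Matrix κ κ ℚ_[2]} (hA : HasNormalForm A)
    (hD : HasNormalForm D) : HasNormalForm (Matrix.fromBlocks A 0 0 D) := by
  obtain ⟨A', hA', σ, hσ⟩ := hA
  obtain ⟨D', hD', τ, hτ⟩ := hD
  exact ⟨_, hA'.fromBlocks hD', _, hσ.fromBlocks hτ⟩

end HasNormalForm

theorem hasNormalForm_of_isEmpty [IsEmpty ι] (G : Matrix ι ι ℚ_[2]) : HasNormalForm G :=
  ⟨G, .refl G, 1, isNormalForm_of_isEmpty G⟩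

theorem hasNormalForm_of_subsingleton [Subsingleton ι] {G : Matrix ι ι ℚ_[2]}
    (hG : ∀ i, G i i ≠ 0) : HasNormalForm G :=
  ⟨G, .refl G, 1, isNormalForm_of_subsingleton hG⟩

theorem hasNormalForm_fin_two {a b c : ℚ_[2]} (hb : b ≠ 0) (ha : ‖a‖ < ‖b‖) (hc : ‖c‖ < ‖b‖) :
    HasNormalForm !![a, b; b, c] := by
  obtain ⟨k, h | h⟩ := integrallyCongruent_block hb ha hc
  · exact ⟨_, h, _, isNormalForm_smul_fin_two k (.inl rfl)⟩
  · exact ⟨_, h, _, isNormalForm_smul_fin_two k (.inr rfl)⟩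

end FiniteIndex

section Induction

variable {ι : Type u} [Fintype ι] [DecidableEq ι]

theorem hasNormalForm_of_pivot {G : Matrix ι ι ℚ_[2]} (hG : G.IsSymm) (hdet : G.det ≠ 0)
    {m : Type*} [Fintype m] [DecidableEq m] [Nonempty m] (f : m ↪ ι) {r : ℝ}
    (hr : ∀ x y, ‖G x y‖ ≤ r) (hA : HasNormalForm (G.submatrix f f))
    (hAdet : IsUnit (G.submatrix f f).det) (hAinv : ∀ i j, ‖(G.submatrix f f)⁻¹ i j‖ * r ≤ 1)
    (ih : ∀ (κ : Type u) [Fintype κ] [DecidableEq κ], Fintype.card κ < Fintype.card ι →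
      ∀ S : Matrix κ κ ℚ_[2], S.IsSymm → S.det ≠ 0 → HasNormalForm S) :
    HasNormalForm G := by
  let e : m ⊕ ↥(Set.range f)ᶜ ≃ ι :=
    (Equiv.sumCongr (Equiv.ofInjective f f.injective) (Equiv.refl _)).trans
      (Equiv.Set.sumCompl _)
  set A := G.submatrix f f
  set B : Matrix m ↥(Set.range f)ᶜ ℚ_[2] := G.submatrix f Subtype.val
  set D := G.submatrix (Subtype.val : ↥(Set.range f)ᶜ → ι) Subtype.val
  have hGe : G.submatrix e e = Matrix.fromBlocks A B Bᵀ D := by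
    ext (i | i) (j | j) <;> simp [e, A, B, D, hG.apply]
  have hschur := integrallyCongruent_fromBlocks_schur (B := B) D (hG.submatrix f) hAdet
    fun i j => norm_mul_apply_le_one fun k =>
      (mul_le_mul_of_nonneg_left (hr _ _) (norm_nonneg _)).trans (hAinv i k)
  have hcard : Fintype.card ↥(Set.range f)ᶜ < Fintype.card ι := by
    have := Fintype.card_le_of_embedding f
    have := Fintype.card_pos (α := m)
    rw [Fintype.card_compl_set, Set.card_range_of_injective f.injective]
    omega
  refine .of_submatrix e ?_
  rw [hGe]
  refine .of_integrallyCongruent hschur (hA.fromBlocks (ih _ hcard _ ?_ ?_))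
  · exact (Matrix.isSymm_fromBlocks_iff.1 (hschur.isSymm (hGe ▸ hG.submatrix e))).2.2.2
  · have := hschur.det_ne_zero (by rwa [← hGe, Matrix.det_submatrix_equiv_self])
    rw [Matrix.det_fromBlocks_zero₂₁] at this
    exact right_ne_zero_of_mul this

theorem hasNormalForm_of_diagonal_pivot {G : Matrix ι ι ℚ_[2]} (hG : G.IsSymm)
    (hdet : G.det ≠ 0) {i : ι} (hi : G i i ≠ 0) (hmax : ∀ x y, ‖G x y‖ ≤ ‖G i i‖)
    (ih : ∀ (κ : Type u) [Fintype κ] [DecidableEq κ], Fintype.card κ < Fintype.card ι →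
      ∀ S : Matrix κ κ ℚ_[2], S.IsSymm → S.det ≠ 0 → HasNormalForm S) :
    HasNormalForm G := by
  let f : Fin 1 ↪ ι := ⟨![i], Function.injective_of_subsingleton _⟩
  have hA : G.submatrix f f = !![G i i] := by
    ext a b; fin_cases a; fin_cases b; rfl
  refine hasNormalForm_of_pivot hG hdet f hmax
    (hA ▸ hasNormalForm_of_subsingleton fun _ => by simpa using hi) (by simpa [hA] using hi)
    (fun a b => ?_) ih
  fin_cases a; fin_cases b
  simp [hA, Ring.inverse_eq_inv', hi]

theorem hasNormalForm_of_offDiagonal_pivot {G : Matrix ι ι ℚ_[2]} (hG : G.IsSymm)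
    (hdet : G.det ≠ 0) {i j : ι} (hij : G i j ≠ 0) (hmax : ∀ x y, ‖G x y‖ ≤ ‖G i j‖)
    (hi : ‖G i i‖ < ‖G i j‖) (hj : ‖G j j‖ < ‖G i j‖)
    (ih : ∀ (κ : Type u) [Fintype κ] [DecidableEq κ], Fintype.card κ < Fintype.card ι →
      ∀ S : Matrix κ κ ℚ_[2], S.IsSymm → S.det ≠ 0 → HasNormalForm S) :
    HasNormalForm G := by
  have hne : i ≠ j := by rintro rfl; exact hi.ne rfl
  obtain ⟨f, hf⟩ : ∃ f : Fin 2 ↪ ι, ⇑f = ![i, j] :=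
    ⟨⟨![i, j], fun a b => by fin_cases a <;> fin_cases b <;> simp [hne, hne.symm]⟩, rfl⟩
  have hA : G.submatrix f f = !![G i i, G i j; G i j, G j j] := by
    ext a b; fin_cases a <;> fin_cases b <;> simp [hf, hG.apply j i]
  have hb : 0 < ‖G i j‖ := norm_pos_iff.2 hij
  have hnormdet : ‖G i i * G j j - G i j * G i j‖ = ‖G i j‖ ^ 2 := by
    have hlt : ‖G i i * G j j‖ < ‖G i j * G i j‖ := by
      rw [norm_mul, norm_mul]; exact mul_lt_mul'' hi hj (norm_nonneg _) (norm_nonneg _)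
    rw [sub_eq_add_neg, Padic.add_eq_max_of_ne (by rw [norm_neg]; exact hlt.ne), norm_neg,
      max_eq_right hlt.le, norm_mul, sq]
  have hdet0 : G i i * G j j - G i j * G i j ≠ 0 :=
    norm_ne_zero_iff.1 (by rw [hnormdet]; positivity)
  refine hasNormalForm_of_pivot hG hdet f hmax (hA ▸ hasNormalForm_fin_two hij hi hj)
    (by rw [hA, Matrix.det_fin_two_of]; exact hdet0.isUnit) (fun k l => ?_) ih
  have hentry : ‖!![G j j, -G i j; -G i j, G i i] k l‖ ≤ ‖G i j‖ := by
    fin_cases k <;> fin_cases l <;> simp [hi.le, hj.le]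
  rw [hA, Matrix.inv_def, Matrix.det_fin_two_of, Matrix.adjugate_fin_two_of, Ring.inverse_eq_inv',
    Matrix.smul_apply, smul_eq_mul, norm_mul, norm_inv, hnormdet]
  calc (‖G i j‖ ^ 2)⁻¹ * ‖!![G j j, -G i j; -G i j, G i i] k l‖ * ‖G i j‖
      ≤ (‖G i j‖ ^ 2)⁻¹ * ‖G i j‖ * ‖G i j‖ := by gcongr
    _ = 1 := by field_simp

theorem hasNormalForm_of_isSymm {G : Matrix ι ι ℚ_[2]} (hG : G.IsSymm) (hdet : G.det ≠ 0) :
    HasNormalForm G := by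
  induction h : Fintype.card ι using Nat.strong_induction_on generalizing ι with
  | _ n ih =>
  subst h
  have ih' : ∀ (κ : Type u) [Fintype κ] [DecidableEq κ], Fintype.card κ < Fintype.card ι →
      ∀ S : Matrix κ κ ℚ_[2], S.IsSymm → S.det ≠ 0 → HasNormalForm S :=
    fun κ _ _ hκ S hS hSdet => ih _ hκ hS hSdet rfl
  rcases isEmpty_or_nonempty ι with hι | hι
  · exact hasNormalForm_of_isEmpty G
  obtain ⟨⟨i, j⟩, hmax⟩ := Finite.exists_max fun x : ι × ι => ‖G x.1 x.2‖
  have hij : G i j ≠ 0 := by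
    intro h0
    have hG0 : G = 0 :=
      Matrix.ext fun x y => norm_le_zero_iff.1 (by simpa [h0] using hmax (x, y))
    exact hdet (by rw [hG0, Matrix.det_zero])
  by_cases hdiag : ∃ k, ‖G i j‖ ≤ ‖G k k‖
  · obtain ⟨k, hk⟩ := hdiag
    have hkk : G k k ≠ 0 := norm_pos_iff.1 ((norm_pos_iff.2 hij).trans_le hk)
    exact hasNormalForm_of_diagonal_pivot hG hdet hkk (fun x y => (hmax (x, y)).trans hk) ih'
  · push Not at hdiag
    exact hasNormalForm_of_offDiagonal_pivot hG hdet hij (fun x y => hmax (x, y)) (hdiag i)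
      (hdiag j) ih'

end Induction

/-- `G` is the Gram matrix of a basis of the lattice and `P` a change of basis; the blocks of `H`
are the orbits of the involution `σ`. -/
theorem lattice_orthogonal_decomposition (n : ℕ) (G : Matrix (Fin n) (Fin n) ℚ_[2])
    (hsymm : G.IsSymm) (hnd : G.det ≠ 0) :
    ∃ P : Matrix (Fin n) (Fin n) ℤ_[2], IsUnit P.det ∧
      ∃ H : Matrix (Fin n) (Fin n) ℚ_[2],
        H = (P.map (fun a => (a : ℚ_[2])))ᵀ * G * (P.map (fun a => (a : ℚ_[2]))) ∧
        ∃ σ : Equiv.Perm (Fin n),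
          (∀ i, σ (σ i) = i) ∧
          (∀ i j, j ≠ i → j ≠ σ i → H i j = 0) ∧
          (∀ i, σ i = i → H i i ≠ 0) ∧
          (∀ i, σ i ≠ i → ∃ k : ℤ,
            (H i i = 0 ∧ H i (σ i) = (2:ℚ_[2]) ^ k ∧ H (σ i) (σ i) = 0) ∨
            (H i i = 2 * (2:ℚ_[2]) ^ k ∧ H i (σ i) = (2:ℚ_[2]) ^ k ∧
              H (σ i) (σ i) = 2 * (2:ℚ_[2]) ^ k)) := by
  obtain ⟨_, ⟨_, ⟨P, hP, rfl⟩, rfl⟩, σ, hσ⟩ := hasNormalForm_of_isSymm hsymm hnd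
  exact ⟨P, hP, _, rfl, σ, hσ⟩
end

section
/- If M is a 1-dimensional unimodular ℤ₂-lattice with odd-norm generator and N is an even unimodular ℤ₂-lattice of rank 2, then the orthogonal direct sum M ⊕ N admits an orthogonal basis. -/
/-!
Write `N = !![n₀, b; b, n₁]`. Evenness makes `n₀` and `n₁` even, so in the local ring `ℤ₂`
both `q = a + n₀` and `c = det N + a * n₁` are units. In `M ⊕ N` with basis `e, f₀, f₁`, the
vector `v₁ = e + f₀` has norm `q`, the vector `v₂ = -b e - b f₀ + q f₁` is orthogonal to `v₁`
and has norm `q * c`, and the cross product `v₃` of `v₁` and `v₂` with respect to the Gram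
matrix is orthogonal to both. The identity `det (v₁ v₂ v₃) = c * q ^ 2` holds over any
commutative ring, so `v₁, v₂, v₃` is an orthogonal basis.
-/

open scoped Matrix BigOperators

noncomputable def bf {ι : Type} [Fintype ι] (M : Matrix ι ι ℤ_[2]) (x y : ι → ℤ_[2]) : ℤ_[2] :=
  ∑ i, ∑ j, x i * M i j * y j

theorem IsLocalRing.isUnit_add_of_mem_maximalIdeal {R : Type*} [CommRing R] [IsLocalRing R]
    {u x : R} (hu : IsUnit u) (hx : x ∈ maximalIdeal R) : IsUnit (u + x) := by
  rw [← notMem_maximalIdeal] at hu ⊢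
  exact fun h ↦ hu (by simpa using sub_mem h hx)

theorem PadicInt.isUnit_add_of_two_dvd {u x : ℤ_[2]} (hu : IsUnit u) (hx : 2 ∣ x) :
    IsUnit (u + x) := by
  refine IsLocalRing.isUnit_add_of_mem_maximalIdeal hu ?_
  rw [PadicInt.maximalIdeal_eq_span_p, Ideal.mem_span_singleton]
  exact_mod_cast hx

theorem bf_single_single {ι : Type} [Fintype ι] [DecidableEq ι] (M : Matrix ι ι ℤ_[2]) (i : ι) :
    bf M (Pi.single i 1) (Pi.single i 1) = M i i := by
  simp [bf, Pi.single_apply]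

section CommRing

variable {R : Type*} [CommRing R]

def orthogonalBasisMatrix (a n₀ b n₁ : R) : Matrix (Fin 1 ⊕ Fin 2) (Fin 1 ⊕ Fin 2) R :=
  let q := a + n₀
  let c := n₀ * n₁ - b * b + a * n₁
  Matrix.fromBlocks 1 !![-b, c * n₀ - a * b * b] !![1; 0]
    !![-b, -(a * c + a * b * b); q, a * b * q]

theorem det_orthogonalBasisMatrix (a n₀ b n₁ : R) :
    (orthogonalBasisMatrix a n₀ b n₁).det = (n₀ * n₁ - b * b + a * n₁) * (a + n₀) ^ 2 := by
  rw [orthogonalBasisMatrix, Matrix.det_fromBlocks_one₁₁, Matrix.det_fin_two]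
  simp only [Matrix.sub_apply, Matrix.mul_apply, Fin.sum_univ_one, Matrix.of_apply,
    Matrix.cons_val_zero, Matrix.cons_val_one, Matrix.cons_val_fin_one]
  ring

theorem transpose_mul_mul_orthogonalBasisMatrix (a n₀ b n₁ : R) :
    (orthogonalBasisMatrix a n₀ b n₁)ᵀ * Matrix.fromBlocks !![a] 0 0 !![n₀, b; b, n₁] *
      orthogonalBasisMatrix a n₀ b n₁ =
    let q := a + n₀
    let c := n₀ * n₁ - b * b + a * n₁
    Matrix.diagonal (Sum.elim ![q] ![q * c, a * (n₀ * n₁ - b * b) * c * q ^ 2]) := by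
  ext (i | i) (j | j) <;> fin_cases i <;> fin_cases j <;>
    simp [orthogonalBasisMatrix, Matrix.mul_apply, Fintype.sum_sum_type, Fin.sum_univ_succ] <;>
    ring

end CommRing

/-- If `M` is a 1-dimensional unimodular ℤ₂-lattice with odd-norm generator (Gram matrix
`(a)` with `a` a unit) and `N` is an even unimodular ℤ₂-lattice of rank 2, then the
orthogonal direct sum `M ⊕ N` admits an orthogonal basis, i.e. its Gram matrix is
ℤ₂-congruent to a diagonal matrix. -/
theorem odd_plus_even_unimodular_has_orthogonal_basis (a : ℤ_[2]) (ha : IsUnit a)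
    (N : Matrix (Fin 2) (Fin 2) ℤ_[2]) (hsymm : N.IsSymm) (hunimod : IsUnit N.det)
    (heven : ∀ x : Fin 2 → ℤ_[2], (2 : ℤ_[2]) ∣ bf N x x) :
    ∃ P : Matrix (Fin 1 ⊕ Fin 2) (Fin 1 ⊕ Fin 2) ℤ_[2], IsUnit P.det ∧
      (Pᵀ * Matrix.fromBlocks !![a] 0 0 N * P).IsDiag := by
  have hN : N = !![N 0 0, N 0 1; N 0 1, N 1 1] := by
    simpa only [hsymm.apply 0 1] using N.eta_fin_two
  have hdet : N.det = N 0 0 * N 1 1 - N 0 1 * N 0 1 := by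
    rw [Matrix.det_fin_two, hsymm.apply 0 1]
  have h₀ : 2 ∣ N 0 0 := bf_single_single N 0 ▸ heven _
  have h₁ : 2 ∣ N 1 1 := bf_single_single N 1 ▸ heven _
  refine ⟨orthogonalBasisMatrix a (N 0 0) (N 0 1) (N 1 1), ?_, ?_⟩
  · rw [det_orthogonalBasisMatrix, ← hdet]
    exact (PadicInt.isUnit_add_of_two_dvd hunimod (h₁.mul_left a)).mul
      ((PadicInt.isUnit_add_of_two_dvd ha h₀).pow 2)
  · have hdiag := transpose_mul_mul_orthogonalBasisMatrix a (N 0 0) (N 0 1) (N 1 1)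
    rw [← hN] at hdiag
    exact hdiag ▸ Matrix.isDiag_diagonal _
end

section
/- For any odd 2-adic integers t and t', the diagonal ℤ₂-lattices ⟨t, t'⟩ and ⟨t+4, t'+4⟩ are isometric. -/
open scoped Matrix BigOperators

/-- Isometry of the ℤ₂-lattices presented by two Gram matrices. -/
def Isom {ι κ : Type} [Fintype ι] [Fintype κ]
    (M : Matrix ι ι ℤ_[2]) (N : Matrix κ κ ℤ_[2]) : Prop :=
  ∃ e : (ι → ℤ_[2]) ≃ₗ[ℤ_[2]] (κ → ℤ_[2]), ∀ x y, bf N (e x) (e y) = bf M x y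

/-!
If `(t + 4) a² = t - 4 (t' + 4)`, the vector `(a, 2)` of `⟨t + 4, t' + 4⟩` has norm `t`, and
splitting it off exhibits the lattice as `⟨t, (t + 4)(t' + 4) t⟩`. Both this `a` and a square root
of `(t + 4)(t' + 4) t / t'` exist by Hensel's lemma, because for odd `x` one has
`x (x + 4) ≡ 5 mod 8`, which makes both ratios `≡ 1 mod 8`. Rescaling the second basis vector
then gives `⟨t, t'⟩`.
-/

namespace PadicInt

theorem isUnit_iff_not_dvd {p : ℕ} [Fact p.Prime] {x : ℤ_[p]} :
    IsUnit x ↔ ¬ (p : ℤ_[p]) ∣ x := by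
  rw [← IsLocalRing.notMem_maximalIdeal, maximalIdeal_eq_span_p, Ideal.mem_span_singleton]

theorem isUnit_iff_not_two_dvd {x : ℤ_[2]} : IsUnit x ↔ ¬ (2 : ℤ_[2]) ∣ x := by
  simpa using isUnit_iff_not_dvd (p := 2) (x := x)

theorem two_dvd_or_two_dvd_sub_one (x : ℤ_[2]) : (2 : ℤ_[2]) ∣ x ∨ (2 : ℤ_[2]) ∣ x - 1 := by
  obtain ⟨n, hn, hx⟩ := exists_mem_range (p := 2) x
  rw [maximalIdeal_eq_span_p, Ideal.mem_span_singleton] at hx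
  interval_cases n <;> simp_all

theorem two_dvd_mul_add_one (x : ℤ_[2]) : (2 : ℤ_[2]) ∣ x * (x + 1) := by
  rcases two_dvd_or_two_dvd_sub_one x with ⟨k, hk⟩ | ⟨k, hk⟩
  · exact ⟨k * (x + 1), by rw [hk]; ring⟩
  · exact ⟨x * (k + 1), by linear_combination x * hk⟩

theorem eight_dvd_mul_add_four_sub_five {x : ℤ_[2]} (hx : ¬ (2 : ℤ_[2]) ∣ x) :
    (8 : ℤ_[2]) ∣ x * (x + 4) - 5 := by
  obtain ⟨k, hk⟩ := (two_dvd_or_two_dvd_sub_one x).resolve_left hx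
  obtain ⟨m, hm⟩ := two_dvd_mul_add_one k
  exact ⟨m + k, by linear_combination (x + 2 * k + 5) * hk + 4 * hm⟩

theorem exists_eq_sq_of_eight_dvd_sub_one {u : ℤ_[2]} (hu : (8 : ℤ_[2]) ∣ u - 1) :
    ∃ r : ℤ_[2], u = r ^ 2 := by
  have hnorm : ‖(Polynomial.X ^ 2 - Polynomial.C u).aeval (1 : ℤ_[2])‖ <
      ‖(Polynomial.X ^ 2 - Polynomial.C u).derivative.aeval (1 : ℤ_[2])‖ ^ 2 := by
    obtain ⟨c, hc⟩ := hu
    have h2 : ‖(2 : ℤ_[2])‖ = 2⁻¹ := by simpa using norm_p (p := 2)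
    have h8 : ‖(8 : ℤ_[2])‖ = 2⁻¹ ^ 3 := by rw [← h2, ← norm_pow]; norm_num
    have heval : (Polynomial.X ^ 2 - Polynomial.C u).aeval (1 : ℤ_[2]) = -(8 * c) := by
      simp only [map_sub, map_pow, Polynomial.aeval_X, Polynomial.aeval_C, one_pow]
      linear_combination -hc
    have hderiv : (Polynomial.X ^ 2 - Polynomial.C u).derivative.aeval (1 : ℤ_[2]) = 2 := by
      simp; norm_num
    rw [heval, hderiv, norm_neg, norm_mul, h8, h2]
    nlinarith [c.norm_le_one]
  obtain ⟨r, hr, -⟩ := hensels_lemma hnorm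
  exact ⟨r, by simpa [sub_eq_zero, eq_comm] using hr⟩

theorem exists_eq_mul_sq_of_eight_dvd_sub {p q : ℤ_[2]} (hp : IsUnit p)
    (h : (8 : ℤ_[2]) ∣ q - p) : ∃ r : ℤ_[2], q = p * r ^ 2 := by
  obtain ⟨r, hr⟩ : ∃ r : ℤ_[2], ↑hp.unit⁻¹ * q = r ^ 2 := by
    refine exists_eq_sq_of_eight_dvd_sub_one (dvd_trans h ⟨↑hp.unit⁻¹, ?_⟩)
    rw [sub_mul, IsUnit.mul_val_inv, mul_comm]
  exact ⟨r, by rw [← hr, ← mul_assoc, IsUnit.mul_val_inv, one_mul]⟩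

end PadicInt

open Matrix PadicInt

theorem bf_eq_dotProduct_mulVec {ι : Type} [Fintype ι] (M : Matrix ι ι ℤ_[2]) (x y : ι → ℤ_[2]) :
    bf M x y = x ⬝ᵥ (M *ᵥ y) := by
  simp only [bf, dotProduct, mulVec, Finset.mul_sum, mul_assoc]

theorem Isom.trans {ι κ μ : Type} [Fintype ι] [Fintype κ] [Fintype μ] {M : Matrix ι ι ℤ_[2]}
    {N : Matrix κ κ ℤ_[2]} {P : Matrix μ μ ℤ_[2]} (h₁ : Isom M N) (h₂ : Isom N P) : Isom M P := by
  obtain ⟨e₁, he₁⟩ := h₁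
  obtain ⟨e₂, he₂⟩ := h₂
  exact ⟨e₁.trans e₂, fun x y => (he₂ _ _).trans (he₁ x y)⟩

theorem isom_of_transpose_mul_mul_eq {ι : Type} [Fintype ι] [DecidableEq ι]
    {M N A : Matrix ι ι ℤ_[2]} (hA : IsUnit A.det) (h : Aᵀ * N * A = M) : Isom M N := by
  let := A.invertibleOfIsUnitDet hA
  refine ⟨A.toLinearEquiv' this, fun x y => ?_⟩
  simp only [bf_eq_dotProduct_mulVec, ← h, ← mulVec_mulVec, dotProduct_mulVec x, vecMul_transpose]
  rfl

theorem isom_diag_mul_sq (a b : ℤ_[2]) {u : ℤ_[2]} (hu : IsUnit u) :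
    Isom !![a, 0; 0, b * u ^ 2] !![a, 0; 0, b] := by
  refine isom_of_transpose_mul_mul_eq (A := !![1, 0; 0, u]) (by simpa using hu) ?_
  ext i j; fin_cases i <;> fin_cases j <;> simp [mul_apply, Fin.sum_univ_two]; ring

/-- `(x, y)` and `(-b y, a x)` are orthogonal, and form a basis because their determinant is `c`. -/
theorem isom_diag_of_mul_sq_add_mul_sq_eq {a b c x y : ℤ_[2]} (hc : IsUnit c)
    (h : a * x ^ 2 + b * y ^ 2 = c) : Isom !![c, 0; 0, a * b * c] !![a, 0; 0, b] := by
  subst h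
  refine isom_of_transpose_mul_mul_eq (A := !![x, -(b * y); y, a * x]) ?_ ?_
  · rw [det_fin_two_of]; convert hc using 1; ring
  · ext i j; fin_cases i <;> fin_cases j <;> simp [mul_apply, Fin.sum_univ_two] <;> ring

/-- For odd 2-adic integers t, t', the diagonal lattices ⟨t,t'⟩ and ⟨t+4,t'+4⟩ are
isometric. -/
theorem diag_isometric_add_four (t t' : ℤ_[2]) (ht : ¬ (2:ℤ_[2]) ∣ t) (ht' : ¬ (2:ℤ_[2]) ∣ t') :
    Isom !![t, 0; 0, t'] !![t + 4, 0; 0, t' + 4] := by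
  have isUnit_add_four {x : ℤ_[2]} (hx : ¬ (2 : ℤ_[2]) ∣ x) : IsUnit (x + 4) :=
    isUnit_iff_not_two_dvd.mpr ((dvd_add_left ⟨2, by norm_num⟩).not.mpr hx)
  obtain ⟨k, hk⟩ := (two_dvd_or_two_dvd_sub_one t').resolve_left ht'
  obtain ⟨a, ha⟩ : ∃ a, t - 4 * (t' + 4) = (t + 4) * a ^ 2 :=
    exists_eq_mul_sq_of_eight_dvd_sub (isUnit_add_four ht)
      ⟨-(k + 3), by linear_combination -4 * hk⟩
  obtain ⟨s, hs⟩ : ∃ s, t' = (t + 4) * (t' + 4) * t * s ^ 2 := by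
    obtain ⟨m, hm⟩ := eight_dvd_mul_add_four_sub_five ht
    refine exists_eq_mul_sq_of_eight_dvd_sub ?_
      ⟨-(k + 3) - m * (t' + 4), by linear_combination -4 * hk - (t' + 4) * hm⟩
    exact ((isUnit_add_four ht).mul (isUnit_add_four ht')).mul (isUnit_iff_not_two_dvd.mpr ht)
  have hs_unit : IsUnit s := (isUnit_pow_iff two_ne_zero).mp
    (isUnit_of_mul_isUnit_right (hs ▸ isUnit_iff_not_two_dvd.mpr ht' : IsUnit (_ * s ^ 2)))
  have h₁ : Isom !![t, 0; 0, t'] !![t, 0; 0, (t + 4) * (t' + 4) * t] := by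
    simpa only [← hs] using isom_diag_mul_sq t ((t + 4) * (t' + 4) * t) hs_unit
  have h₂ : Isom !![t, 0; 0, (t + 4) * (t' + 4) * t] !![t + 4, 0; 0, t' + 4] :=
    isom_diag_of_mul_sq_add_mul_sq_eq (x := a) (y := 2) (isUnit_iff_not_two_dvd.mpr ht)
      (by linear_combination -ha)
  exact h₁.trans h₂
end

section
/- The ℤ₂-lattice ⟨-3, 1, 1, 1⟩ admits an orthogonal direct sum decomposition into a sublattice isometric to ⟨-3, 3⟩ and a sublattice isometric to the even lattice with Gram matrix [[2,1],[1,2]]. -/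
open scoped Matrix

/-!
The change of basis can be taken with integer entries: over `ℤ` it carries `⟨-3, 1, 1, 1⟩`
to the required block form, but its determinant is `-3`, so it is only a change of basis
after inverting `3`, which `ℤ₂` does.
-/

theorem PadicInt.isUnit_intCast_iff {p : ℕ} [Fact p.Prime] (k : ℤ) :
    IsUnit (k : ℤ_[p]) ↔ ¬ (p : ℤ) ∣ k := by
  rw [← norm_int_lt_one_iff_dvd, ← not_isUnit_iff, not_not]

/-- Columns `e₀, e₁ + e₂ + e₃` span the `⟨-3, 3⟩` summand, and `e₁ - e₂, e₃ - e₂` the `A₂` one. -/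
def decompositionBasis : Matrix (Fin 4) (Fin 4) ℤ :=
  !![1, 0, 0, 0; 0, 1, 1, 0; 0, 1, -1, -1; 0, 1, 0, 1]

theorem det_decompositionBasis : decompositionBasis.det = -3 := by
  decide

theorem decompositionBasis_transpose_mul_diagonal_mul :
    decompositionBasisᵀ * Matrix.diagonal ![-3, 1, 1, 1] * decompositionBasis =
      !![-3, 0, 0, 0; 0, 3, 0, 0; 0, 0, 2, 1; 0, 0, 1, 2] := by
  decide

/-- The ℤ₂-lattice ⟨-3,1,1,1⟩ admits an orthogonal direct sum decomposition into a
sublattice isometric to ⟨-3,3⟩ and one isometric to the even lattice `[[2,1],[1,2]]`: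
there is a ℤ₂-basis whose Gram matrix is the block diagonal sum of `[[-3,0],[0,3]]` and
`[[2,1],[1,2]]`. -/
theorem diag_neg_three_ones_decomposition :
    ∃ P : Matrix (Fin 4) (Fin 4) ℤ_[2], IsUnit P.det ∧
      Pᵀ * Matrix.diagonal ![(-3:ℤ_[2]), 1, 1, 1] * P =
        !![(-3:ℤ_[2]), 0, 0, 0; 0, 3, 0, 0; 0, 0, 2, 1; 0, 0, 1, 2] := by
  let cast := Int.castRingHom ℤ_[2]
  refine ⟨decompositionBasis.map cast, ?_, ?_⟩
  · rw [← RingHom.mapMatrix_apply, ← RingHom.map_det, det_decompositionBasis, eq_intCast,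
      PadicInt.isUnit_intCast_iff]
    decide
  · have hDiag : Matrix.diagonal ![(-3:ℤ_[2]), 1, 1, 1] =
        (Matrix.diagonal ![(-3:ℤ), 1, 1, 1]).map cast := by
      rw [Matrix.diagonal_map (map_zero cast)]
      congr 1
      ext i
      fin_cases i <;> simp [cast]
    have hGram : !![(-3:ℤ_[2]), 0, 0, 0; 0, 3, 0, 0; 0, 0, 2, 1; 0, 0, 1, 2] =
        (!![(-3:ℤ), 0, 0, 0; 0, 3, 0, 0; 0, 0, 2, 1; 0, 0, 1, 2]).map cast := by
      ext i j
      fin_cases i <;> fin_cases j <;> simp [cast]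
    rw [hDiag, hGram, ← decompositionBasis_transpose_mul_diagonal_mul, Matrix.map_mul, Matrix.map_mul,
      Matrix.transpose_map]
end

section
/- If x and x' are vectors of equal odd norm in an integral ℤ₂-lattice L with even inner product x·x', then the reflection in x − x' is an isometry of L exchanging x and x', hence x^⊥ ≅ x'^⊥. -/
open scoped Matrix

/-!
Write `v = x - x'`. Since `x² = x'²`, we get `v² = 2 (x² - x·x')`, and `x² - x·x'` is a
`2`-adic unit because `x²` is odd and `x·x'` is even. Hence `v²` divides `2 (y·v)` for every `y`,
so the reflection `y ↦ y - (2 (y·v) / v²) v` is defined over `ℤ₂`; as for any reflection it is an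
isometry, and it sends `x` to `x - v = x'`. An isometry sending `x` to `x'` maps `x^⊥` onto `x'^⊥`.
-/

open Module

theorem PadicInt.isUnit_sub_of_not_dvd_of_dvd {p : ℕ} [Fact p.Prime] {a b : ℤ_[p]}
    (ha : ¬ (p : ℤ_[p]) ∣ a) (hb : (p : ℤ_[p]) ∣ b) : IsUnit (a - b) := by
  by_contra h
  rw [PadicInt.not_isUnit_iff, PadicInt.norm_lt_one_iff_dvd] at h
  exact ha (by simpa using dvd_add h hb)

namespace LinearMap

variable {R M : Type*} [CommRing R] [AddCommGroup M] [Module R M] (B : M →ₗ[R] M →ₗ[R] R)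

lemma IsOrthogonal.map_ker_eq_ker {φ : M ≃ₗ[R] M} (hφ : B.IsOrthogonal φ) {x x' : M}
    (hx : φ x = x') : (ker (B x)).map (φ : M →ₗ[R] M) = ker (B x') := by
  ext y
  rw [Submodule.map_equiv_eq_comap_symm, Submodule.mem_comap, mem_ker, mem_ker,
    LinearEquiv.coe_coe, ← hφ, hx, LinearEquiv.apply_symm_apply]

lemma apply_sub_sub_self_of_apply_self_eq (hB : B.IsSymm) {x x' : M} (h : B x x = B x' x') :
    B (x - x') (x - x') = 2 * (B x x - B x x') := by
  have hsymm : B x' x = B x x' := hB.eq x' x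
  simp only [map_sub, sub_apply]
  rw [hsymm, ← h]
  ring

namespace IsReflective

lemma of_apply_self_eq_two_mul {x : M} {u : R} (h2 : IsRegular (2 : R)) (hu : IsUnit u)
    (h : B x x = 2 * u) : IsReflective B x where
  regular := h ▸ h2.mul hu.isRegular
  dvd_two_mul _ := h ▸ mul_dvd_mul_left 2 hu.dvd

variable {B}

lemma apply_self_smul_reflection_apply {x : M} (hx : IsReflective B x) (y : M) :
    B x x • reflection (coroot_apply_self B hx) y = B x x • y - (2 * B x y) • x := by
  rw [reflection_apply, smul_sub, smul_smul, apply_self_mul_coroot_apply]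

variable {x x' : M}

lemma coroot_sub_apply_left (hB : B.IsSymm) (h : B x x = B x' x')
    (hv : IsReflective B (x - x')) : coroot B hv x = 1 := by
  have hsymm : B x' x = B x x' := hB.eq x' x
  refine hv.regular.left (?_ : B (x - x') (x - x') * _ = B (x - x') (x - x') * 1)
  rw [apply_self_mul_coroot_apply, mul_one, apply_sub_sub_self_of_apply_self_eq B hB h, map_sub,
    sub_apply, hsymm]

lemma reflection_sub_apply_left (hB : B.IsSymm) (h : B x x = B x' x')
    (hv : IsReflective B (x - x')) : reflection (coroot_apply_self B hv) x = x' := by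
  rw [reflection_apply, coroot_sub_apply_left hB h hv, one_smul, sub_sub_cancel]

lemma reflection_sub_apply_right (hB : B.IsSymm) (h : B x x = B x' x')
    (hv : IsReflective B (x - x')) : reflection (coroot_apply_self B hv) x' = x := by
  have := involutive_reflection (coroot_apply_self B hv) x
  rwa [reflection_sub_apply_left hB h hv] at this

end IsReflective

end LinearMap

/-- If `x, x'` have equal odd norm in an integral ℤ₂-lattice `L` and `x·x'` is even,
then the reflection in `v = x - x'` is an isometry of `L` exchanging `x` and `x'`
(characterized by `v² • r y = v² • y - (2 (y·v)) • v`, where `v²` is twice a unit),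
hence `x^⊥ ≅ x'^⊥`. -/
theorem reflection_exchanges_and_perp_isometric (n : ℕ) (G : Matrix (Fin n) (Fin n) ℤ_[2])
    (hsymm : G.IsSymm) (x x' : Fin n → ℤ_[2])
    (hodd : ¬ (2 : ℤ_[2]) ∣ Matrix.toBilin' G x x)
    (heq : Matrix.toBilin' G x x = Matrix.toBilin' G x' x')
    (hev : (2 : ℤ_[2]) ∣ Matrix.toBilin' G x x') :
    (∃ r : (Fin n → ℤ_[2]) ≃ₗ[ℤ_[2]] (Fin n → ℤ_[2]),
      (∀ y, Matrix.toBilin' G (x - x') (x - x') • r y =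
          Matrix.toBilin' G (x - x') (x - x') • y -
            (2 * Matrix.toBilin' G y (x - x')) • (x - x')) ∧
      (∀ y z, Matrix.toBilin' G (r y) (r z) = Matrix.toBilin' G y z) ∧
      r x = x' ∧ r x' = x) ∧
    ∃ e : LinearMap.ker (Matrix.toBilin' G x) ≃ₗ[ℤ_[2]] LinearMap.ker (Matrix.toBilin' G x'),
      ∀ y z : LinearMap.ker (Matrix.toBilin' G x),
        Matrix.toBilin' G (e y : Fin n → ℤ_[2]) (e z : Fin n → ℤ_[2]) =
          Matrix.toBilin' G (y : Fin n → ℤ_[2]) (z : Fin n → ℤ_[2]) := by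
  set B := Matrix.toBilin' G
  have hB : LinearMap.IsSymm B :=
    LinearMap.BilinForm.isSymm_iff.mp (Matrix.isSymm_toBilin'_iff_isSymm.mpr hsymm)
  have hu : IsUnit (B x x - B x x') :=
    PadicInt.isUnit_sub_of_not_dvd_of_dvd (by exact_mod_cast hodd) (by exact_mod_cast hev)
  have hv : LinearMap.IsReflective B (x - x') :=
    .of_apply_self_eq_two_mul B (.of_ne_zero two_ne_zero) hu
      (LinearMap.apply_sub_sub_self_of_apply_self_eq B hB heq)
  set r := reflection (LinearMap.IsReflective.coroot_apply_self B hv)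
  have hr : B.IsOrthogonal r := hv.isOrthogonal_reflection B hB
  have hrx : r x = x' := hv.reflection_sub_apply_left hB heq
  refine ⟨⟨r, fun y => ?_, hr, hrx, hv.reflection_sub_apply_right hB heq⟩,
    LinearEquiv.ofSubmodules r _ _ (hr.map_ker_eq_ker B hrx), fun y z => hr y z⟩
  rw [hv.apply_self_smul_reflection_apply, ← hB.eq (x - x') y, RingHom.id_apply]
end
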